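/- Let a, b be integers with 0 < b < a and let β be the unique real root greater than 1 of the polynomial P(X) = X^3 − aX^2 − bX + 1. If either (a ≥ 2 and b = 1) or (a ≥ 4 and b = 2), then L_⊕(β) ≥ 2; more precisely, there exist x, y ∈ ℤ_β with x + y ∈ fin(β) but β·(x + y) ∉ ℤ_β. -/

import Mathlib

/-!
The cubic `P` is irreducible over `ℚ` (its only possible rational roots are `±1`) and has a root
`γ ∈ (0, 1)`, so every integer polynomial vanishing at `β` vanishes at `γ`. If `x, y ∈ ℤ_β` and
`z = x + y ∈ fin(β)` but `β^L z ∉ ℤ_β`, the greedy expansion of `z` reaches `m > L` places below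
the point, so `β^m |z| = Q_z(β)` for a digit polynomial `Q_z` with last digit at least `1`.
Conjugating `Q_z(β) = ±β^m (Q_x(β) + Q_y(β))` gives `1 ≤ Q_z(γ) ≤ 2 γ^m ⌊β⌋ / (1 - γ)`, which fails
for large `L`. Hence the set defining `L_⊕(β)` is nonempty (its infimum is not the junk value `0`).

For the lower bound, both cases have `x, y ∈ ℤ_β` with `(x + y) β² = β^(k+2) + 1`:
then `x + y = β^k + β^(-2) ∈ fin(β)`, while `β (x + y) = β^(k+1) + β^(-1) ∉ ℤ_β`.
-/

open Polynomial

/-- The β-transformation `T_β(x) = βx - ⌊βx⌋`. -/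
noncomputable def betaT (β : ℝ) : ℝ → ℝ := fun x => β * x - ⌊β * x⌋

/-- `fin(β)`: reals `x` such that `|x|/β^N ∈ [0,1)` and the greedy expansion of
`|x|/β^N` is finite, for some `N, n ∈ ℕ`. -/
def finBeta (β : ℝ) : Set ℝ :=
  {x | ∃ N n : ℕ, |x| / β ^ N ∈ Set.Ico (0 : ℝ) 1 ∧ (betaT β)^[n] (|x| / β ^ N) = 0}

/-- `ℤ_β`: the set of β-integers. -/
def betaInt (β : ℝ) : Set ℝ :=
  {x | ∃ N : ℕ, |x| / β ^ N ∈ Set.Ico (0 : ℝ) 1 ∧ (betaT β)^[N] (|x| / β ^ N) = 0}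

/-- `L_⊕(β)`: the least `L ∈ ℕ` such that `β^L·(x+y) ∈ ℤ_β` for all
`x, y ∈ ℤ_β` with `x + y ∈ fin(β)`. -/
noncomputable def Lplus (β : ℝ) : ℕ :=
  sInf {L : ℕ | ∀ x ∈ betaInt β, ∀ y ∈ betaInt β,
    x + y ∈ finBeta β → β ^ L * (x + y) ∈ betaInt β}

/-- `L_⊗(β)`: the least `L ∈ ℕ` such that `β^L·(x·y) ∈ ℤ_β` for all
`x, y ∈ ℤ_β` with `x·y ∈ fin(β)`. -/
noncomputable def Lmul (β : ℝ) : ℕ :=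
  sInf {L : ℕ | ∀ x ∈ betaInt β, ∀ y ∈ betaInt β,
    x * y ∈ finBeta β → β ^ L * (x * y) ∈ betaInt β}

open Set Function

section BetaExpansion

variable {β : ℝ}

lemma betaT_mem_Ico (x : ℝ) : betaT β x ∈ Ico 0 1 :=
  ⟨Int.fract_nonneg (β * x), Int.fract_lt_one (β * x)⟩

lemma iterate_betaT_mem_Ico {w : ℝ} (hw : w ∈ Ico 0 1) : ∀ n, (betaT β)^[n] w ∈ Ico 0 1
  | 0 => hw
  | n + 1 => by rw [iterate_succ_apply']; exact betaT_mem_Ico _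

lemma iterate_betaT_zero (n : ℕ) : (betaT β)^[n] 0 = 0 :=
  iterate_fixed (by simp [betaT]) n

lemma betaT_intCast_add_div (hβ : β ≠ 0) (d : ℤ) {u : ℝ} (hu : u ∈ Ico 0 1) :
    betaT β ((d + u) / β) = u := by
  change Int.fract (β * ((d + u) / β)) = u
  rw [mul_div_cancel₀ _ hβ, Int.fract_intCast_add, Int.fract_eq_self]
  exact hu

lemma betaT_one_div (hβ : β ≠ 0) : betaT β (1 / β) = 0 := by
  simpa using betaT_intCast_add_div hβ 1 (u := 0) ⟨le_rfl, one_pos⟩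

lemma iterate_betaT_div_pow (hβ : 1 ≤ β) {v : ℝ} (hv : v ∈ Ico 0 1) :
    ∀ j, (betaT β)^[j] (v / β ^ j) = v
  | 0 => by simp
  | j + 1 => by
    have hvj : v / β ^ j ∈ Ico 0 1 :=
      ⟨div_nonneg hv.1 (by positivity), (div_le_self hv.1 (one_le_pow₀ hβ)).trans_lt hv.2⟩
    have hβ0 : β ≠ 0 := by positivity
    have hstep := betaT_intCast_add_div hβ0 0 hvj
    rw [Int.cast_zero, zero_add, div_div, ← pow_succ] at hstep
    rw [iterate_succ_apply, hstep, iterate_betaT_div_pow hβ hv j]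

lemma iterate_betaT_div_pow_of_le (hβ : 1 ≤ β) {v : ℝ} {M N : ℕ} (hMN : M ≤ N)
    (hv : v / β ^ M ∈ Ico 0 1) : (betaT β)^[N] (v / β ^ N) = (betaT β)^[M] (v / β ^ M) := by
  obtain ⟨j, rfl⟩ := Nat.exists_eq_add_of_le hMN
  rw [pow_add, ← div_div, iterate_add_apply, iterate_betaT_div_pow hβ hv]

lemma iterate_betaT_eq_zero_of_mem_betaInt (hβ : 1 ≤ β) {x : ℝ} (hx : x ∈ betaInt β) {M : ℕ}
    (hM : |x| / β ^ M < 1) : (betaT β)^[M] (|x| / β ^ M) = 0 := by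
  obtain ⟨N, hN, hT⟩ := hx
  rcases le_total M N with h | h
  · rwa [← iterate_betaT_div_pow_of_le hβ h ⟨by positivity, hM⟩]
  · rwa [iterate_betaT_div_pow_of_le hβ h hN]

lemma mul_mem_betaInt (hβ : 0 < β) {t : ℝ} (ht : t ∈ betaInt β) : β * t ∈ betaInt β := by
  obtain ⟨N, hN, hT⟩ := ht
  have hdiv : |β * t| / β ^ (N + 1) = |t| / β ^ N := by
    rw [abs_mul, abs_of_pos hβ, pow_succ']
    field_simp
  exact ⟨N + 1, hdiv ▸ hN, by rw [hdiv, iterate_succ_apply', hT]; simp [betaT]⟩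

def digitsVal (β : ℝ) : List ℤ → ℝ
  | [] => 0
  | d :: ds => d * β ^ ds.length + digitsVal β ds

lemma iterate_betaT_digitsVal (hβ : 0 < β) : ∀ ds : List ℤ,
    (∀ t ∈ ds.tails, 0 ≤ digitsVal β t ∧ digitsVal β t < β ^ t.length) →
    (betaT β)^[ds.length] (digitsVal β ds / β ^ ds.length) = 0
  | [], _ => by simp [digitsVal]
  | d :: ds, h => by
    have hds : ∀ t ∈ ds.tails, 0 ≤ digitsVal β t ∧ digitsVal β t < β ^ t.length :=
      fun t ht => h t (by simp [ht])
    obtain ⟨h0, h1⟩ := hds ds ((List.mem_tails _ _).2 (List.suffix_refl ds))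
    have hshift : digitsVal β (d :: ds) / β ^ (d :: ds).length =
        (d + digitsVal β ds / β ^ ds.length) / β := by
      simp only [digitsVal, List.length_cons, pow_succ]
      field_simp
    rw [hshift, List.length_cons, iterate_succ_apply,
      betaT_intCast_add_div hβ.ne' d ⟨by positivity, (div_lt_one (by positivity)).2 h1⟩,
      iterate_betaT_digitsVal hβ ds hds]

lemma digitsVal_mem_betaInt (hβ : 0 < β) (ds : List ℤ)
    (h : ∀ t ∈ ds.tails, 0 ≤ digitsVal β t ∧ digitsVal β t < β ^ t.length) :
    digitsVal β ds ∈ betaInt β := by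
  obtain ⟨h0, h1⟩ := h ds ((List.mem_tails _ _).2 (List.suffix_refl ds))
  refine ⟨ds.length, ?_, ?_⟩ <;> rw [abs_of_nonneg h0]
  · exact ⟨by positivity, (div_lt_one (by positivity)).2 h1⟩
  · exact iterate_betaT_digitsVal hβ ds h

noncomputable def digitPoly (β w : ℝ) : ℕ → ℤ[X]
  | 0 => 0
  | n + 1 => X * digitPoly β w n + C ⌊β * (betaT β)^[n] w⌋

lemma aeval_digitPoly_add_iterate (w : ℝ) (n : ℕ) :
    aeval β (digitPoly β w n) + (betaT β)^[n] w = β ^ n * w := by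
  induction n with
  | zero => simp [digitPoly]
  | succ n ih =>
    simp only [digitPoly, eq_intCast, map_add, map_mul, aeval_X, map_intCast,
      iterate_succ_apply', betaT]
    linear_combination β * ih

lemma coeff_zero_digitPoly_succ (w : ℝ) (n : ℕ) :
    (digitPoly β w (n + 1)).coeff 0 = ⌊β * (betaT β)^[n] w⌋ := by
  simp [digitPoly]

lemma coeff_digitPoly_mem_Icc (hβ : 0 ≤ β) {w : ℝ} (hw : w ∈ Ico 0 1) (n i : ℕ) :
    (digitPoly β w n).coeff i ∈ Icc 0 ⌊β⌋ := by
  induction n generalizing i with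
  | zero => simpa [digitPoly] using Int.floor_nonneg.2 hβ
  | succ n ih =>
    cases i with
    | zero =>
      obtain ⟨h0, h1⟩ := iterate_betaT_mem_Ico hw n
      rw [coeff_zero_digitPoly_succ]
      exact ⟨Int.floor_nonneg.2 (mul_nonneg hβ h0),
        Int.floor_le_floor (mul_le_of_le_one_right hβ h1.le)⟩
    | succ i => simpa only [digitPoly, coeff_add, coeff_X_mul, coeff_C_succ, add_zero] using ih i

lemma one_le_floor_of_betaT_eq_zero (hβ : 0 < β) {u : ℝ} (hu : 0 < u) (hTu : betaT β u = 0) :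
    1 ≤ ⌊β * u⌋ := by
  have h : (⌊β * u⌋ : ℝ) = β * u := by linarith [show β * u - ⌊β * u⌋ = 0 from hTu]
  exact_mod_cast (show (0 : ℝ) < ⌊β * u⌋ by rw [h]; positivity)

lemma exists_aeval_eq_of_mem_betaInt (hβ : 0 < β) {x : ℝ} (hx : x ∈ betaInt β) :
    ∃ Q : ℤ[X], (∀ i, |Q.coeff i| ≤ ⌊β⌋) ∧ aeval β Q = x := by
  obtain ⟨N, hN, hT⟩ := hx
  set P := digitPoly β (|x| / β ^ N) N
  have hP : aeval β P = |x| := by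
    have := aeval_digitPoly_add_iterate (β := β) (|x| / β ^ N) N
    rw [hT, add_zero, mul_div_cancel₀ _ (by positivity)] at this
    exact this
  have hcoeff (i : ℕ) : |P.coeff i| ≤ ⌊β⌋ := by
    obtain ⟨h0, h1⟩ := coeff_digitPoly_mem_Icc hβ.le hN N i
    rwa [abs_of_nonneg h0]
  rcases abs_choice x with h | h
  · exact ⟨P, hcoeff, h ▸ hP⟩
  · exact ⟨-P, by simpa using hcoeff, by rw [map_neg, hP, h, neg_neg]⟩

lemma pow_mul_mem_betaInt_or_exists_aeval (hβ : 0 < β) {z : ℝ} (hz : z ∈ finBeta β) (L : ℕ) :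
    β ^ L * z ∈ betaInt β ∨ ∃ m, L < m ∧ ∃ Q : ℤ[X], (∀ i, Q.coeff i ∈ Icc 0 ⌊β⌋) ∧
      1 ≤ Q.coeff 0 ∧ aeval β Q = β ^ m * |z| := by
  classical
  obtain ⟨N, n, hw, hTn⟩ := hz
  set w := |z| / β ^ N with hwdef
  have hex : ∃ n, (betaT β)^[n] w = 0 := ⟨n, hTn⟩
  have hTfind : (betaT β)^[Nat.find hex] w = 0 := Nat.find_spec hex
  by_cases hle : Nat.find hex ≤ N + L
  · left
    have hscale : |β ^ L * z| / β ^ (N + L) = w := by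
      rw [abs_mul, abs_of_pos (by positivity), pow_add, hwdef]
      field_simp
    refine ⟨N + L, hscale ▸ hw, ?_⟩
    rw [hscale, ← Nat.sub_add_cancel hle, iterate_add_apply, hTfind, iterate_betaT_zero]
  · right
    -- `Nat.find hex` is the length of the greedy expansion of `w`, so its last digit is nonzero
    obtain ⟨k, hk⟩ := Nat.exists_eq_add_one.2 (show 0 < Nat.find hex by omega)
    refine ⟨k + 1 - N, by omega, digitPoly β w (k + 1), coeff_digitPoly_mem_Icc hβ.le hw _,
      ?_, ?_⟩
    · have hTk : (betaT β)^[k] w ≠ 0 := Nat.find_min hex (by omega)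
      rw [hk, iterate_succ_apply'] at hTfind
      rw [coeff_zero_digitPoly_succ]
      exact one_le_floor_of_betaT_eq_zero hβ
        (lt_of_le_of_ne (iterate_betaT_mem_Ico hw k).1 (Ne.symm hTk)) hTfind
    · have := aeval_digitPoly_add_iterate (β := β) w (k + 1)
      rw [← hk, hTfind, add_zero, hk] at this
      rw [this, pow_sub₀ _ hβ.ne' (show N ≤ k + 1 by omega), hwdef]
      field_simp

end BetaExpansion

lemma aeval_eq_zero_of_irreducible {K L : Type*} [Field K] [Field L] [Algebra K L] {p : K[X]}
    (hp : Irreducible p) {x y : L} (hx : aeval x p = 0) (hy : aeval y p = 0) {q : K[X]}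
    (hq : aeval x q = 0) : aeval y q = 0 := by
  have hxy : minpoly K x = minpoly K y := by
    rw [← minpoly.eq_of_irreducible hp hx, minpoly.eq_of_irreducible hp hy]
  exact aeval_eq_zero_of_dvd_aeval_eq_zero (hxy ▸ minpoly.dvd K x hq) (minpoly.aeval K y)

lemma abs_aeval_le_of_abs_coeff_le {γ : ℝ} (hγ : |γ| < 1) {Q : ℤ[X]} {A : ℤ}
    (hQ : ∀ i, |Q.coeff i| ≤ A) : |aeval γ Q| ≤ A / (1 - |γ|) := by
  have hA : (0 : ℝ) ≤ A := by exact_mod_cast (abs_nonneg _).trans (hQ 0)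
  rw [aeval_eq_sum_range, le_div_iff₀ (by linarith)]
  calc |∑ i ∈ Finset.range (Q.natDegree + 1), Q.coeff i • γ ^ i| * (1 - |γ|)
      ≤ (∑ i ∈ Finset.range (Q.natDegree + 1), (A : ℝ) * |γ| ^ i) * (1 - |γ|) := by
        gcongr
        refine (Finset.abs_sum_le_sum_abs _ _).trans (Finset.sum_le_sum fun i _ => ?_)
        rw [zsmul_eq_mul, abs_mul, abs_pow]
        gcongr
        exact_mod_cast hQ i
    _ = A * (1 - |γ| ^ (Q.natDegree + 1)) := by
        rw [← Finset.mul_sum, mul_assoc, geom_sum_mul_neg]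
    _ ≤ A := mul_le_of_le_one_right hA (by linarith [pow_nonneg (abs_nonneg γ) (Q.natDegree + 1)])

lemma one_le_aeval_of_coeff_nonneg {γ : ℝ} (hγ : 0 ≤ γ) {Q : ℤ[X]} (hQ : ∀ i, 0 ≤ Q.coeff i)
    (hQ0 : 1 ≤ Q.coeff 0) : 1 ≤ aeval γ Q := by
  rw [aeval_eq_sum_range]
  refine le_trans ?_ (Finset.single_le_sum (f := fun i => Q.coeff i • γ ^ i)
    (fun i _ => smul_nonneg (hQ i) (pow_nonneg hγ i)) (Finset.mem_range.2 (Nat.succ_pos _)))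
  simpa using (show (1 : ℝ) ≤ Q.coeff 0 by exact_mod_cast hQ0)

section AdditionDefect

variable {β : ℝ}

theorem exists_pow_mul_add_mem_betaInt (hβ : 0 < β) {γ : ℝ} (hγ0 : 0 ≤ γ) (hγ1 : γ < 1)
    (hconj : ∀ Q : ℤ[X], aeval β Q = 0 → aeval γ Q = 0) :
    ∃ L, ∀ x ∈ betaInt β, ∀ y ∈ betaInt β, x + y ∈ finBeta β → β ^ L * (x + y) ∈ betaInt β := by
  set B : ℝ := 2 * (⌊β⌋ / (1 - γ))
  obtain ⟨L, hL⟩ := Filter.eventually_atTop.1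
    (((tendsto_pow_atTop_nhds_zero_of_lt_one hγ0 hγ1).mul_const B).eventually
      (gt_mem_nhds (show 0 * B < 1 by simp)))
  refine ⟨L, fun x hx y hy hxy => ?_⟩
  rcases pow_mul_mem_betaInt_or_exists_aeval hβ hxy L with h | ⟨m, hLm, Qz, hQz, hQz0, hβQz⟩
  · exact h
  exfalso
  obtain ⟨Qx, hQx, hβQx⟩ := exists_aeval_eq_of_mem_betaInt hβ hx
  obtain ⟨Qy, hQy, hβQy⟩ := exists_aeval_eq_of_mem_betaInt hβ hy
  -- squaring removes the sign of `x + y`, so that one integer relation holds in both cases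
  have hγQ : aeval γ Qz ^ 2 = (γ ^ m * (aeval γ Qx + aeval γ Qy)) ^ 2 := by
    have := hconj (Qz ^ 2 - (X ^ m * (Qx + Qy)) ^ 2)
      (by simp [hβQz, hβQx, hβQy, mul_pow, sq_abs])
    simpa [sub_eq_zero] using this
  have hγ : |γ| < 1 := by rwa [abs_of_nonneg hγ0]
  have hbound : |aeval γ Qx + aeval γ Qy| ≤ B := by
    have hx' := abs_aeval_le_of_abs_coeff_le hγ hQx
    have hy' := abs_aeval_le_of_abs_coeff_le hγ hQy
    rw [abs_of_nonneg hγ0] at hx' hy'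
    linarith [abs_add_le (aeval γ Qx) (aeval γ Qy)]
  have h1 : 1 ≤ aeval γ Qz := one_le_aeval_of_coeff_nonneg hγ0 (fun i => (hQz i).1) hQz0
  refine lt_irrefl (1 : ℝ) ?_
  calc (1 : ℝ) ≤ |aeval γ Qz| := h1.trans (le_abs_self _)
    _ = γ ^ m * |aeval γ Qx + aeval γ Qy| := by
        rw [(sq_eq_sq_iff_abs_eq_abs _ _).1 hγQ, abs_mul, abs_of_nonneg (pow_nonneg hγ0 m)]
    _ ≤ γ ^ m * B := by gcongr
    _ < 1 := hL m hLm.le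

lemma two_le_Lplus (hβ : 0 < β)
    (hfin : ∃ L, ∀ x ∈ betaInt β, ∀ y ∈ betaInt β, x + y ∈ finBeta β →
      β ^ L * (x + y) ∈ betaInt β)
    {x y : ℝ} (hx : x ∈ betaInt β) (hy : y ∈ betaInt β) (hxy : x + y ∈ finBeta β)
    (hnot : β * (x + y) ∉ betaInt β) : 2 ≤ Lplus β := by
  have hmem : β ^ Lplus β * (x + y) ∈ betaInt β := Nat.sInf_mem hfin x hx y hy hxy
  by_contra! hlt
  obtain h | h : Lplus β = 0 ∨ Lplus β = 1 := by omega
  · rw [h, pow_zero, one_mul] at hmem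
    exact hnot (mul_mem_betaInt hβ hmem)
  · rw [h, pow_one] at hmem
    exact hnot hmem

end AdditionDefect

lemma irreducible_map_cubic (a b : ℤ) (h1 : a + b ≠ 2) (h2 : a ≠ b) :
    Irreducible ((X ^ 3 - C a * X ^ 2 - C b * X + 1 : ℤ[X]).map (algebraMap ℤ ℚ)) := by
  set p : ℤ[X] := X ^ 3 - C a * X ^ 2 - C b * X + 1
  have hp : p.Monic := by unfold p; monicity!
  have hdeg : (p.map (algebraMap ℤ ℚ)).natDegree = 3 := by
    rw [natDegree_map_eq_of_injective (RingHom.injective_int _)]; unfold p; compute_degree!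
  refine irreducible_of_degree_le_three_of_not_isRoot (by rw [hdeg]; decide) fun r hr => ?_
  rw [IsRoot, eval_map_algebraMap] at hr
  obtain ⟨m, rfl, hm⟩ := exists_integer_of_is_root_of_monic hp hr
  rcases Int.isUnit_iff.1 (isUnit_of_dvd_one (by simpa [p] using hm)) with rfl | rfl <;>
    simp only [p, eq_intCast, map_add, aeval_sub, map_pow, aeval_X, map_mul, map_intCast,
      map_one] at hr <;> push_cast at hr
  · exact h1 (by exact_mod_cast (by linarith : (a : ℚ) + b = 2))
  · exact h2 (by exact_mod_cast (by linarith : (a : ℚ) = b))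

lemma aeval_eq_zero_of_cubic {a b : ℤ} (h1 : a + b ≠ 2) (h2 : a ≠ b) {β γ : ℝ}
    (hβ : β ^ 3 - a * β ^ 2 - b * β + 1 = 0) (hγ : γ ^ 3 - a * γ ^ 2 - b * γ + 1 = 0)
    (Q : ℤ[X]) (hQ : aeval β Q = 0) : aeval γ Q = 0 := by
  rw [← aeval_map_algebraMap ℚ] at hQ ⊢
  exact aeval_eq_zero_of_irreducible (irreducible_map_cubic a b h1 h2)
    (by simpa [aeval_map_algebraMap] using hβ) (by simpa [aeval_map_algebraMap] using hγ) hQ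

lemma exists_cubic_root_mem_Ioo {a b : ℝ} (hab : 2 < a + b) :
    ∃ γ ∈ Ioo (0 : ℝ) 1, γ ^ 3 - a * γ ^ 2 - b * γ + 1 = 0 :=
  intermediate_value_Ioo' zero_le_one (by fun_prop) (by norm_num; linarith)

lemma lt_of_cubic_root {a b β : ℝ} (hb : 1 ≤ b) (hβ : 1 < β)
    (hroot : β ^ 3 - a * β ^ 2 - b * β + 1 = 0) : a < β := by
  have h : β ^ 2 * (β - a) = b * β - 1 := by linear_combination hroot
  by_contra! hle
  nlinarith [mul_nonpos_of_nonneg_of_nonpos (sq_nonneg β) (sub_nonpos.2 hle)]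

section Counterexamples

variable {a : ℤ} {β : ℝ}

lemma mem_finBeta_and_mul_notMem_betaInt (hβ : 2 ≤ β) (k : ℕ) {z : ℝ}
    (hz : z * β ^ 2 = β ^ (k + 2) + 1) : z ∈ finBeta β ∧ β * z ∉ betaInt β := by
  have hβ1 : 1 ≤ β := by linarith
  have hβ0 : β ≠ 0 := by positivity
  set w := (β ^ (k + 2) + 1) / β ^ (k + 3)
  have hzpos : 0 < z := by nlinarith [pow_pos (show 0 < β by positivity) (k + 2)]
  have hz' : z = (β ^ (k + 2) + 1) / β ^ 2 := by
    field_simp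
    linarith
  have hzw : |z| / β ^ (k + 1) = w := by
    rw [abs_of_pos hzpos, hz']
    simp only [w]
    field_simp
    ring
  have hβzw : |β * z| / β ^ (k + 2) = w := by
    rw [abs_mul, abs_of_pos (show 0 < β by positivity), abs_of_pos hzpos, hz']
    simp only [w]
    field_simp
    ring
  have hw : w ∈ Ico 0 1 := by
    refine ⟨by positivity, (div_lt_one (by positivity)).2 ?_⟩
    have : 4 ≤ β ^ (k + 2) := by
      calc (4 : ℝ) = 2 ^ 2 := by norm_num
        _ ≤ β ^ 2 := by gcongr
        _ ≤ β ^ (k + 2) := pow_le_pow_right₀ hβ1 (by omega)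
    rw [show β ^ (k + 3) = β ^ (k + 2) * β by ring]
    nlinarith
  have hinv : 1 / β ∈ Ico 0 1 := ⟨by positivity, by rw [div_lt_one (by positivity)]; linarith⟩
  have hTw : (betaT β)^[k + 2] w = 1 / β := by
    have hw' : w = ((1 : ℤ) + (1 / β) / β ^ (k + 1)) / β := by
      simp only [w]
      field_simp
      ring
    have hfrac : (1 / β) / β ^ (k + 1) ∈ Ico 0 1 :=
      ⟨by positivity, (div_le_self hinv.1 (one_le_pow₀ hβ1)).trans_lt hinv.2⟩
    rw [iterate_succ_apply, hw', betaT_intCast_add_div hβ0 1 hfrac,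
      iterate_betaT_div_pow hβ1 hinv]
  constructor
  · exact ⟨k + 1, k + 3, hzw ▸ hw, by rw [hzw, iterate_succ_apply', hTw, betaT_one_div hβ0]⟩
  · intro h
    have := iterate_betaT_eq_zero_of_mem_betaInt hβ1 h (hβzw ▸ hw.2)
    rw [hβzw, hTw] at this
    exact absurd this (by positivity)

lemma exists_counterexample_of_b_eq_one (ha : 2 ≤ a) (hβ : 1 < β)
    (hroot : β ^ 3 - a * β ^ 2 - β + 1 = 0) :
    ∃ x ∈ betaInt β, ∃ y ∈ betaInt β, x + y ∈ finBeta β ∧ β * (x + y) ∉ betaInt β := by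
  have haβ : (a : ℝ) < β := lt_of_cubic_root le_rfl hβ (by linear_combination hroot)
  have ha' : (2 : ℝ) ≤ a := by exact_mod_cast ha
  have hβ0 : 0 < β := by linarith
  have hx := digitsVal_mem_betaInt hβ0 [1] (by
    simp only [List.tails, List.forall_mem_cons, List.not_mem_nil, IsEmpty.forall_iff,
      forall_const, and_true, digitsVal, List.length_cons, List.length_nil, pow_zero, pow_one,
      mul_one, add_zero, zero_add, le_refl, zero_lt_one]
    push_cast [zero_mul, zero_add]
    exact ⟨zero_le_one, hβ⟩)
  have hy := digitsVal_mem_betaInt hβ0 [a - 1, a] (by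
    simp only [List.tails, List.forall_mem_cons, List.not_mem_nil, IsEmpty.forall_iff,
      forall_const, and_true, digitsVal, List.length_cons, List.length_nil, pow_zero, pow_one,
      mul_one, add_zero, zero_add, le_refl, zero_lt_one]
    push_cast [zero_mul, zero_add]
    exact ⟨⟨by nlinarith, by nlinarith⟩, by linarith, haβ⟩)
  refine ⟨_, hx, _, hy, mem_finBeta_and_mul_notMem_betaInt (by linarith) 2 ?_⟩
  simp only [digitsVal, List.length_cons, List.length_nil]
  push_cast
  linear_combination (-β - 1) * hroot

lemma exists_counterexample_of_b_eq_two (ha : 4 ≤ a) (hβ : 1 < β)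
    (hroot : β ^ 3 - a * β ^ 2 - 2 * β + 1 = 0) :
    ∃ x ∈ betaInt β, ∃ y ∈ betaInt β, x + y ∈ finBeta β ∧ β * (x + y) ∉ betaInt β := by
  have haβ : (a : ℝ) < β := lt_of_cubic_root one_le_two hβ hroot
  have ha' : (4 : ℝ) ≤ a := by exact_mod_cast ha
  have hβ0 : 0 < β := by linarith
  have hx := digitsVal_mem_betaInt hβ0 [a - 1, 4] (by
    simp only [List.tails, List.forall_mem_cons, List.not_mem_nil, IsEmpty.forall_iff,
      forall_const, and_true, digitsVal, List.length_cons, List.length_nil, pow_zero, pow_one,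
      mul_one, add_zero, zero_add, le_refl, zero_lt_one]
    push_cast [zero_mul, zero_add]
    exact ⟨⟨by nlinarith, by nlinarith⟩, by norm_num, by linarith⟩)
  have hv : 0 ≤ ((a : ℝ) - 1) * β + a ∧ ((a : ℝ) - 1) * β + a < β ^ 2 :=
    ⟨by nlinarith, by nlinarith⟩
  have hy := digitsVal_mem_betaInt hβ0 [a, 0, a - 1, a] (by
    simp only [List.tails, List.forall_mem_cons, List.not_mem_nil, IsEmpty.forall_iff,
      forall_const, and_true, digitsVal, List.length_cons, List.length_nil, pow_zero, pow_one,
      mul_one, add_zero, zero_add, le_refl, zero_lt_one]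
    push_cast [zero_mul, zero_add]
    exact ⟨⟨by nlinarith, by nlinarith⟩, ⟨hv.1, by nlinarith⟩, hv, by linarith, haβ⟩)
  refine ⟨_, hx, _, hy, mem_finBeta_and_mul_notMem_betaInt (by linarith) 4 ?_⟩
  simp only [digitsVal, List.length_cons, List.length_nil]
  push_cast
  linear_combination (-β ^ 3 - 2 * β - 1) * hroot

end Counterexamples

theorem stmt6_general (a b : ℤ) (β : ℝ) (hβ : 1 < β)
    (hroot : β ^ 3 - (a : ℝ) * β ^ 2 - (b : ℝ) * β + 1 = 0)
    (hcase : (2 ≤ a ∧ b = 1) ∨ (4 ≤ a ∧ b = 2)) :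
    2 ≤ Lplus β ∧
    ∃ x ∈ betaInt β, ∃ y ∈ betaInt β,
      x + y ∈ finBeta β ∧ β * (x + y) ∉ betaInt β := by
  obtain ⟨x, hx, y, hy, hxy, hnot⟩ :
      ∃ x ∈ betaInt β, ∃ y ∈ betaInt β, x + y ∈ finBeta β ∧ β * (x + y) ∉ betaInt β := by
    rcases hcase with ⟨ha, rfl⟩ | ⟨ha, rfl⟩
    · exact exists_counterexample_of_b_eq_one ha hβ (by simpa using hroot)
    · exact exists_counterexample_of_b_eq_two ha hβ (by exact_mod_cast hroot)
  have hab : 2 < a + b ∧ a ≠ b := by omega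
  obtain ⟨γ, hγ, hγroot⟩ := exists_cubic_root_mem_Ioo (a := a) (b := b) (by exact_mod_cast hab.1)
  have hfin := exists_pow_mul_add_mem_betaInt (by linarith) hγ.1.le hγ.2
    (aeval_eq_zero_of_cubic hab.1.ne' hab.2 hroot hγroot)
  exact ⟨two_le_Lplus (by linarith) hfin hx hy hxy hnot, x, hx, y, hy, hxy, hnot⟩

theorem stmt6 (a b : ℤ) (hb : 0 < b) (hba : b < a) (β : ℝ) (hβ : 1 < β)
    (hroot : β ^ 3 - (a : ℝ) * β ^ 2 - (b : ℝ) * β + 1 = 0)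
    (hcase : (2 ≤ a ∧ b = 1) ∨ (4 ≤ a ∧ b = 2)) :
    2 ≤ Lplus β ∧
    ∃ x ∈ betaInt β, ∃ y ∈ betaInt β,
      x + y ∈ finBeta β ∧ β * (x + y) ∉ betaInt β :=
  stmt6_general a b β hβ hroot hcase
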